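/- Let n be even and suppose w ∈ E_n has descent set D(w) consisting only of even numbers. Let e ∈ [n−1] be even with w(1) < w(2) < ⋯ < w(e). Write w = w^J w_J for the parabolic factorisation with respect to J = {s₀,…,s_{e−1}} (so w_J ∈ B_e embedded in B_n fixing e+1,…,n, and w^J is the minimal coset representative). Then L(w) = L(w^J) + L(w_J). -/

import Mathlib

open Finset Polynomial

def IsSigned (n : ℕ) (w : ℤ → ℤ) : Prop :=
  (∀ j : ℤ, w (-j) = -w j) ∧
    Set.BijOn w (Set.Icc (-(n : ℤ)) n) (Set.Icc (-(n : ℤ)) n)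

noncomputable def Lset (n : ℕ) (w : ℤ → ℤ) : Finset (ℤ × ℤ) :=
  (Finset.Icc (-(n : ℤ)) n ×ˢ Finset.Icc (-(n : ℤ)) n).filter
    fun p => p.1 < p.2 ∧ w p.2 < w p.1 ∧ p.1 % 2 ≠ p.2 % 2

noncomputable def Lstat (n : ℕ) (w : ℤ → ℤ) : ℕ := (Lset n w).card / 2

noncomputable def invStat (n : ℕ) (w : ℤ → ℤ) : ℕ :=
  ((Finset.Icc (1 : ℤ) n ×ˢ Finset.Icc (1 : ℤ) n).filter
    fun p => p.1 < p.2 ∧ w p.2 < w p.1).card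

noncomputable def negStat (n : ℕ) (w : ℤ → ℤ) : ℕ :=
  ((Finset.Icc (1 : ℤ) n).filter fun i => w i < 0).card

noncomputable def nspStat (n : ℕ) (w : ℤ → ℤ) : ℕ :=
  ((Finset.Icc (1 : ℤ) n ×ˢ Finset.Icc (1 : ℤ) n).filter
    fun p => p.1 < p.2 ∧ w p.1 + w p.2 < 0).card

noncomputable def lenStat (n : ℕ) (w : ℤ → ℤ) : ℕ := invStat n w + negStat n w + nspStat n w

noncomputable def Dset (n : ℕ) (w : ℤ → ℤ) : Finset ℤ :=
  (Finset.Ico (0 : ℤ) n).filter fun i => w (i + 1) < w i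

abbrev HypOct (n : ℕ) := Equiv.Perm (Fin n) × (Fin n → Bool)

def HypOct.fn {n : ℕ} (w : HypOct n) : ℤ → ℤ := fun j =>
  if h : 1 ≤ j ∧ j ≤ (n : ℤ) then
    (if w.2 ⟨(j - 1).toNat, by omega⟩ then -1 else 1) *
      (((w.1 ⟨(j - 1).toNat, by omega⟩ : Fin n) : ℤ) + 1)
  else if h' : 1 ≤ -j ∧ -j ≤ (n : ℤ) then
    -((if w.2 ⟨(-j - 1).toNat, by omega⟩ then -1 else 1) *
      (((w.1 ⟨(-j - 1).toNat, by omega⟩ : Fin n) : ℤ) + 1))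
  else 0

/-!
Split the pairs counted by `Lset` according to whether their entries lie in `I = [-e, e]`.
Since `y` permutes `I` and fixes everything else while `x` is increasing on `I`, the pairs of `w`
inside `I` are exactly those of `y`, `x` has none there, and `w` and `x` have the same pairs
outside `I`. The mixed pairs are counted column by column, and for a column `j ∈ (e, n]` one
needs, for `w` and for `x`, as many odd (and even) `i ∈ I` with value above the common value at
`j`. For `x` these `i` form a final segment of `I`, so exactly half of them, rounded down, are
odd; for `w` they are as many (through `y`), and the same parity balance comes from `w = u v`:
with `q = |w j|`, the positions `k ∈ [1, e]` with `|w k| > q` are those for which `v k` avoids a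
window `(α, α + q]` with `v j` at one end. As the descents of `w` are even, `v` increases on
each pair `(2i - 1, 2i)`, so above any threshold `t` the even positions with `v`-value above `t`
outnumber the odd ones, on `[1, e]` and on `(e, n]` alike; since `v` fills `[1, n]`, the excess
on `[1, e]` is at most `t mod 2`, and these bounds at the ends of the window give the balance.
-/

lemma card_filter_add_card_filter_eq {α : Type*} {s : Finset α} {p q p' q' : α → Prop}
    [DecidablePred p] [DecidablePred q] [DecidablePred p'] [DecidablePred q']
    (h : ∀ a ∈ s, ((if p a then 1 else 0) + (if q a then 1 else 0) : ℕ) =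
      (if p' a then 1 else 0) + (if q' a then 1 else 0)) :
    #{a ∈ s | p a} + #{a ∈ s | q a} = #{a ∈ s | p' a} + #{a ∈ s | q' a} := by
  simp only [card_filter, ← sum_add_distrib]
  exact sum_congr rfl h

lemma card_filter_comp_of_bijOn {α : Type*} {s : Finset α} {y : α → α}
    (hy : Set.BijOn y s s) (p : α → Prop) [DecidablePred p] :
    #{i ∈ s | p (y i)} = #{i ∈ s | p i} := by
  refine card_nbij y (fun i hi => ?_) (hy.injOn.mono (filter_subset _ _)) fun i hi => ?_
  · simp only [coe_filter, Set.mem_ofPred_eq] at hi ⊢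
    exact ⟨hy.mapsTo hi.1, hi.2⟩
  · simp only [coe_filter, Set.mem_ofPred_eq] at hi
    obtain ⟨j, hj, rfl⟩ := hy.surjOn hi.1
    exact ⟨j, by simpa using ⟨hj, hi.2⟩, rfl⟩

lemma card_filter_even_add_card_filter_odd (s : Finset ℤ) :
    #{i ∈ s | i % 2 = 0} + #{i ∈ s | i % 2 = 1} = #s := by
  rw [← card_filter_add_card_filter_not (s := s) fun i => i % 2 = 0]
  congr 2
  exact filter_congr fun i _ => by omega

lemma card_filter_odd_Ioc {a b : ℤ} (h : a ≤ b) :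
    (#{i ∈ Ioc a b | i % 2 = 1} : ℤ) = (b + 1) / 2 - (a + 1) / 2 := by
  induction b, h using Int.leInduction with
  | base => simp
  | succ b hab ih =>
    rw [← insert_Ioc_right_eq_Ioc_add_one hab, filter_insert]
    split_ifs with hb
    · rw [card_insert_of_notMem (by simp)]
      push_cast
      omega
    · omega

def OddHalf (s : Finset ℤ) : Prop := #{i ∈ s | i % 2 = 1} = #s / 2

lemma oddHalf_Ioc {a b : ℤ} (hab : a ≤ b) (hb : b % 2 = 0) : OddHalf (Ioc a b) := by
  have := card_filter_odd_Ioc hab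
  rw [OddHalf, Int.card_Ioc]
  omega

lemma oddHalf_image_iff {s : Finset ℤ} {φ : ℤ → ℤ} (hφ : Set.InjOn φ s)
    (hpar : ∀ i ∈ s, φ i % 2 = i % 2) : OddHalf (s.image φ) ↔ OddHalf s := by
  rw [OddHalf, OddHalf, filter_image, card_image_of_injOn (hφ.mono (filter_subset _ _)),
    card_image_of_injOn hφ, filter_congr fun i hi => by rw [hpar i hi]]

lemma OddHalf.card_filter_mod_two_ne_eq {s t : Finset ℤ} (hs : OddHalf s) (ht : OddHalf t)
    (hst : #s = #t) (j : ℤ) : #{i ∈ s | i % 2 ≠ j % 2} = #{i ∈ t | i % 2 ≠ j % 2} := by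
  have hodd : #{i ∈ s | i % 2 = 1} = #{i ∈ t | i % 2 = 1} := by rw [hs, ht, hst]
  rcases Int.emod_two_eq_zero_or_one j with hj | hj <;> rw [hj]
  · have (s' : Finset ℤ) : {i ∈ s' | i % 2 ≠ 0} = {i ∈ s' | i % 2 = 1} :=
      filter_congr fun i _ => by omega
    rw [this, this, hodd]
  · have := card_filter_add_card_filter_not (s := s) (fun i => i % 2 = 1)
    have := card_filter_add_card_filter_not (s := t) (fun i => i % 2 = 1)
    simp only [ne_eq]
    omega

lemma map_zero_of_odd {f : ℤ → ℤ} (hf : ∀ j, f (-j) = -f j) : f 0 = 0 := by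
  have := hf 0
  simp at this
  omega

lemma Icc_one_subset_Icc_neg (n : ℕ) : Set.Icc (1 : ℤ) n ⊆ Set.Icc (-(n : ℤ)) n :=
  Set.Icc_subset_Icc (by omega) le_rfl

lemma strictMonoOn_Icc_of_odd {f : ℤ → ℤ} {e : ℤ} (hf : ∀ j, f (-j) = -f j) (h1 : 0 < f 1)
    (hasc : ∀ i, 1 ≤ i → i < e → f i < f (i + 1)) : StrictMonoOn f (Set.Icc (-e) e) := by
  have h0 := map_zero_of_odd hf
  refine strictMonoOn_of_lt_add_one Set.ordConnected_Icc fun a _ ha ha' => ?_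
  simp only [Set.mem_Icc] at ha ha'
  rcases (show a ≤ -2 ∨ a = -1 ∨ a = 0 ∨ 1 ≤ a by omega) with ha0 | rfl | rfl | ha0
  · have h := hasc (-(a + 1)) (by omega) (by omega)
    rw [show -(a + 1) + 1 = -a by ring, hf, hf] at h
    omega
  · rw [show (-1 : ℤ) + 1 = 0 by norm_num, h0, hf 1]
    omega
  · simpa [h0] using h1
  · exact hasc a ha0 ha'.2

namespace IsSigned

variable {n : ℕ} {f : ℤ → ℤ}

lemma map_zero (hf : IsSigned n f) : f 0 = 0 :=
  map_zero_of_odd hf.1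

lemma map_ne_zero (hf : IsSigned n f) {i : ℤ} (hi : i ∈ Set.Icc (-(n : ℤ)) n)
    (hi0 : i ≠ 0) : f i ≠ 0 := fun h =>
  hi0 (hf.2.injOn hi ⟨by omega, by omega⟩ (h.trans hf.map_zero.symm))

lemma bijOn_Icc_one (hf : IsSigned n f) (hpos : ∀ j ∈ Icc (1 : ℤ) n, 0 < f j) :
    Set.BijOn f (Set.Icc 1 n) (Set.Icc 1 n) := by
  refine ⟨fun j hj => ?_, hf.2.injOn.mono (Icc_one_subset_Icc_neg n), fun m hm => ?_⟩
  · have hfj := hf.2.mapsTo (Icc_one_subset_Icc_neg n hj)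
    have hpj := hpos j (by simpa using hj)
    exact ⟨hpj, hfj.2⟩
  · obtain ⟨j, hj, rfl⟩ := hf.2.surjOn (Icc_one_subset_Icc_neg n hm)
    refine ⟨j, ⟨?_, hj.2⟩, rfl⟩
    by_contra hj1
    have hj0 : j ≠ 0 := by rintro rfl; rw [hf.map_zero] at hm; simp at hm
    have hodd := hf.1 j
    have hpj := hpos (-j) (by simp only [Set.mem_Icc] at hj; simp only [mem_Icc]; omega)
    simp only [Set.mem_Icc] at hm
    omega

lemma bijOn_abs_Icc_one (hf : IsSigned n f) :
    Set.BijOn (fun m => |f m|) (Set.Icc 1 n) (Set.Icc 1 n) := by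
  refine ⟨fun m hm => ?_, fun a ha b hb hab => ?_, fun k hk => ?_⟩
  · have h1 := hf.2.mapsTo (Icc_one_subset_Icc_neg n hm)
    have h2 := hf.map_ne_zero (Icc_one_subset_Icc_neg n hm) (by simp at hm; omega)
    simp only [Set.mem_Icc] at h1 ⊢
    rcases abs_cases (f m) with ⟨h, _⟩ | ⟨h, _⟩ <;> omega
  · rcases abs_eq_abs.1 hab with h | h
    · exact hf.2.injOn (Icc_one_subset_Icc_neg n ha) (Icc_one_subset_Icc_neg n hb) h
    · simp only [Set.mem_Icc] at ha hb
      have := hf.2.injOn (show a ∈ Set.Icc (-(n : ℤ)) n from ⟨by omega, ha.2⟩)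
        (show -b ∈ Set.Icc (-(n : ℤ)) n from ⟨by omega, by omega⟩) (h.trans (hf.1 b).symm)
      omega
  · obtain ⟨m, hm, hmk⟩ := hf.2.surjOn (Icc_one_subset_Icc_neg n hk)
    have hm0 : m ≠ 0 := by rintro rfl; rw [hf.map_zero] at hmk; simp at hk; omega
    simp only [Set.mem_Icc] at hm hk
    refine ⟨|m|, ⟨by rcases abs_cases m with ⟨h, _⟩ | ⟨h, _⟩ <;> omega,
      by rcases abs_cases m with ⟨h, _⟩ | ⟨h, _⟩ <;> omega⟩, ?_⟩
    rcases abs_cases m with ⟨h, _⟩ | ⟨h, _⟩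
    · simp only [h, hmk, abs_eq_self]; omega
    · simp only [h, hf.1, hmk, abs_neg, abs_eq_self]; omega

lemma card_filter_abs_le (hf : IsSigned n f) {q : ℤ} (hq : 0 ≤ q) (hqn : q ≤ n) :
    (#{m ∈ Icc (1 : ℤ) n | |f m| ≤ q} : ℤ) = q := by
  have hbij := hf.bijOn_abs_Icc_one
  have hinj : Set.InjOn (fun m => |f m|) ({m ∈ Icc (1 : ℤ) n | |f m| ≤ q} : Finset ℤ) :=
    hbij.injOn.mono fun m hm => by simpa using (mem_filter.1 hm).1
  have himage : {m ∈ Icc (1 : ℤ) n | |f m| ≤ q}.image (fun m => |f m|) = Icc 1 q := by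
    ext k
    simp only [mem_image, mem_filter]
    constructor
    · rintro ⟨m, ⟨hm, hmq⟩, rfl⟩
      exact mem_Icc.2 ⟨(hbij.mapsTo (by simpa using hm)).1, hmq⟩
    · intro hk
      rw [mem_Icc] at hk
      obtain ⟨m, hm, rfl⟩ :=
        hbij.surjOn (show k ∈ Set.Icc (1 : ℤ) n from ⟨hk.1, by omega⟩)
      exact ⟨m, ⟨by simpa using hm, hk.2⟩, rfl⟩
  rw [← card_image_of_injOn hinj, himage, Int.card_Icc]
  omega

lemma bijOn_Icc_of_fixes {e : ℕ} (hf : IsSigned n f) (hen : e ≤ n)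
    (hfix : ∀ j : ℤ, (e : ℤ) < |j| → |j| ≤ n → f j = j) :
    Set.BijOn f (Set.Icc (-(e : ℤ)) e) (Set.Icc (-(e : ℤ)) e) := by
  have hmem : Set.Icc (-(e : ℤ)) e ⊆ Set.Icc (-(n : ℤ)) n :=
    Set.Icc_subset_Icc (by omega) (by omega)
  have hout {i : ℤ} (hi : i ∈ Set.Icc (-(n : ℤ)) n) (hie : i ∉ Set.Icc (-(e : ℤ)) e) :
      f i = i := by
    simp only [Set.mem_Icc] at hi hie
    apply hfix <;> rcases abs_cases i with ⟨h, _⟩ | ⟨h, _⟩ <;> omega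
  refine ⟨fun i hi => ?_, hf.2.injOn.mono hmem, fun i hi => ?_⟩
  · by_contra hfi
    have hfi' := hf.2.mapsTo (hmem hi)
    have hfix := hf.2.injOn hfi' (hmem hi) (hout hfi' hfi)
    exact hfi (by rw [hfix]; exact hi)
  · obtain ⟨j, hj, rfl⟩ := hf.2.surjOn (hmem hi)
    refine ⟨j, ?_, rfl⟩
    by_contra hje
    exact hje (hout hj hje ▸ hi)

end IsSigned

lemma filter_abs_le_eq_Icc {n : ℕ} {u : ℤ → ℤ} (hu : MonotoneOn u (Set.Icc 1 n)) {q : ℤ}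
    (hne : ({m ∈ Icc (1 : ℤ) n | |u m| ≤ q} : Finset ℤ).Nonempty) :
    {m ∈ Icc (1 : ℤ) n | |u m| ≤ q} = Icc (min' _ hne) (max' _ hne) := by
  have hmin := mem_filter.1 (min'_mem _ hne)
  have hmax := mem_filter.1 (max'_mem _ hne)
  ext m
  rw [mem_Icc]
  refine ⟨fun hm => ⟨min'_le _ _ hm, le_max' _ _ hm⟩, fun ⟨h₁, h₂⟩ => ?_⟩
  rw [mem_Icc] at hmin hmax
  have hm : m ∈ Set.Icc (1 : ℤ) n := ⟨hmin.1.1.trans h₁, h₂.trans hmax.1.2⟩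
  have hlo := hu ⟨hmin.1.1, hmin.1.2⟩ hm h₁
  have hhi := hu hm ⟨hmax.1.1, hmax.1.2⟩ h₂
  refine mem_filter.2 ⟨by simpa using hm, abs_le.2 ⟨?_, ?_⟩⟩
  · linarith [neg_abs_le (u (min' _ hne)), hmin.2]
  · linarith [le_abs_self (u (max' _ hne)), hmax.2]

lemma exists_window {n : ℕ} {u : ℤ → ℤ} (hu : IsSigned n u)
    (humono : StrictMonoOn u (Set.Icc 1 n)) {m₀ : ℤ} (hm₀ : m₀ ∈ Set.Icc (1 : ℤ) n) :
    ∃ α : ℤ, 0 ≤ α ∧ α + |u m₀| ≤ n ∧ (m₀ = α + 1 ∨ m₀ = α + |u m₀|) ∧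
      ∀ m ∈ Set.Icc (1 : ℤ) n, (|u m₀| < |u m| ↔ m ≤ α ∨ α + |u m₀| < m) := by
  set q := |u m₀|
  have hqn : q ∈ Set.Icc (1 : ℤ) n := hu.bijOn_abs_Icc_one.mapsTo hm₀
  have hm₀Z : m₀ ∈ ({m ∈ Icc (1 : ℤ) n | |u m| ≤ q} : Finset ℤ) :=
    mem_filter.2 ⟨by simpa using hm₀, le_rfl⟩
  have hZ := filter_abs_le_eq_Icc humono.monotoneOn ⟨m₀, hm₀Z⟩
  set z₁ := min' _ ⟨m₀, hm₀Z⟩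
  set z₂ := max' _ ⟨m₀, hm₀Z⟩
  have hcard := hu.card_filter_abs_le (q := q) (by linarith [hqn.1]) hqn.2
  have hz₁ := mem_filter.1 (min'_mem _ ⟨m₀, hm₀Z⟩)
  have hz₂ := mem_filter.1 (max'_mem _ ⟨m₀, hm₀Z⟩)
  have hm₀z : z₁ ≤ m₀ ∧ m₀ ≤ z₂ := by simpa [hZ] using hm₀Z
  rw [hZ, Int.card_Icc] at hcard
  rw [mem_Icc] at hz₁ hz₂
  refine ⟨z₁ - 1, by omega, by omega, ?_, fun m hm => ?_⟩
  · -- `|u|` is largest at the ends of the window, `u` being increasing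
    rcases abs_cases (u m₀) with ⟨h, _⟩ | ⟨h, _⟩
    · right
      by_contra hne
      have := humono hm₀ ⟨hz₂.1.1, hz₂.1.2⟩ (lt_of_le_of_ne hm₀z.2 (by omega))
      linarith [le_abs_self (u z₂), hz₂.2]
    · left
      by_contra hne
      have := humono ⟨hz₁.1.1, hz₁.1.2⟩ hm₀ (lt_of_le_of_ne hm₀z.1 (by omega))
      linarith [neg_abs_le (u z₁), hz₁.2]
  · have : m ∉ ({m ∈ Icc (1 : ℤ) n | |u m| ≤ q} : Finset ℤ) ↔ q < |u m| := by
      simp [hm.1, hm.2]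
    rw [← this, hZ, mem_Icc]
    omega

lemma card_filter_odd_le_card_filter_even {P : Finset ℤ} {g : ℤ → ℤ}
    (hstep : ∀ j ∈ P, j % 2 = 1 → j + 1 ∈ P ∧ g j < g (j + 1)) (t : ℤ) :
    #{j ∈ P | t < g j ∧ j % 2 = 1} ≤ #{j ∈ P | t < g j ∧ j % 2 = 0} := by
  refine card_le_card_of_injOn (· + 1) (fun j hj => ?_) fun a _ b _ h => by simpa using h
  simp only [coe_filter, Set.mem_ofPred_eq] at hj ⊢
  obtain ⟨hjP, hjt, hjo⟩ := hj
  obtain ⟨h1, h2⟩ := hstep j hjP hjo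
  exact ⟨h1, by omega, by omega⟩

/- Let `D t` be the excess of even over odd `j ∈ P` with `g j > t`, so `0 ≤ D t ≤ t % 2`.
The excess outside the window is `D (α + q) - D α`, which could only be `-1` if `D α = 1`,
i.e. for odd `α`; then `m₀ = α + q` has the wrong parity, and if `m₀ = α + 1` is not a value
of `g` then `D (α + 1) = D α = 1 > (α + 1) % 2`. -/
lemma oddHalf_filter_outside_window {n : ℕ} {P : Finset ℤ} {g : ℤ → ℤ}
    (hpos : ∀ j ∈ P, 0 < g j)
    (hlow : ∀ t : ℤ, #{j ∈ P | t < g j ∧ j % 2 = 1} ≤ #{j ∈ P | t < g j ∧ j % 2 = 0})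
    (hup : ∀ t : ℤ, 0 ≤ t → t ≤ n →
      (#{j ∈ P | t < g j ∧ j % 2 = 0} : ℤ) ≤ #{j ∈ P | t < g j ∧ j % 2 = 1} + t % 2)
    {α q m₀ : ℤ} (hα : 0 ≤ α) (hq : 1 ≤ q) (hαq : α + q ≤ n)
    (hm₀ : ∀ j ∈ P, g j ≠ m₀)
    (hend : m₀ = α + 1 ∨ m₀ = α + q) (hpar : m₀ % 2 = q % 2) :
    OddHalf {j ∈ P | g j ≤ α ∨ α + q < g j} := by
  have hsplit (r : ℤ) : #{j ∈ P | (g j ≤ α ∨ α + q < g j) ∧ j % 2 = r} +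
      #{j ∈ P | α < g j ∧ j % 2 = r} =
      #{j ∈ P | 0 < g j ∧ j % 2 = r} + #{j ∈ P | α + q < g j ∧ j % 2 = r} :=
    card_filter_add_card_filter_eq fun j hj => by have := hpos j hj; split_ifs <;> omega
  have := hsplit 0
  have := hsplit 1
  have hparity := card_filter_even_add_card_filter_odd {j ∈ P | g j ≤ α ∨ α + q < g j}
  rw [filter_filter, filter_filter] at hparity
  have := hlow 0
  have := hlow α
  have := hlow (α + q)
  have := hup 0 le_rfl (by omega)
  have := hup α hα (by omega)
  have := hup (α + q) (by omega) hαq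
  rw [OddHalf, filter_filter]
  rcases hend with rfl | rfl
  · have hshift (r : ℤ) :
        #{j ∈ P | α + 1 < g j ∧ j % 2 = r} = #{j ∈ P | α < g j ∧ j % 2 = r} :=
      congrArg card (filter_congr fun j hj => by have := hm₀ j hj; omega)
    have := hshift 0
    have := hshift 1
    have := hup (α + 1) (by omega) (by omega)
    omega
  · omega

lemma oddHalf_filter_lt_iff_abs {e : ℕ} {f : ℤ → ℤ} (hf : ∀ j, f (-j) = -f j) {q : ℤ}
    (hq : 0 ≤ q) :
    OddHalf {i ∈ Icc (-(e : ℤ)) e | q < f i} ↔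
      OddHalf {k ∈ Icc (1 : ℤ) e | q < |f k|} := by
  have h0 := map_zero_of_odd hf
  have habs (i : ℤ) : |f (|i|)| = |f i| := by
    rcases abs_cases i with ⟨h, _⟩ | ⟨h, _⟩ <;> simp [h, hf]
  have hinj :
      Set.InjOn (fun i : ℤ => |i|) ({i ∈ Icc (-(e : ℤ)) e | q < f i} : Finset ℤ) := by
    intro a ha b hb hab
    simp only [coe_filter, Set.mem_ofPred_eq] at ha hb
    rcases abs_eq_abs.1 hab with h | h
    · exact h
    · have := hf b
      rw [← h] at this
      omega
  have himage : {i ∈ Icc (-(e : ℤ)) e | q < f i}.image (fun i => |i|) =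
      {k ∈ Icc (1 : ℤ) e | q < |f k|} := by
    ext k
    simp only [mem_image, mem_filter, mem_Icc]
    constructor
    · rintro ⟨i, ⟨⟨hi₁, hi₂⟩, hqi⟩, rfl⟩
      have hi0 : i ≠ 0 := by rintro rfl; omega
      refine ⟨⟨?_, ?_⟩, by rw [habs]; exact hqi.trans_le (le_abs_self _)⟩ <;>
        rcases abs_cases i with ⟨h, _⟩ | ⟨h, _⟩ <;> omega
    · rintro ⟨⟨hk₁, hk₂⟩, hqk⟩
      rcases abs_cases (f k) with ⟨h, _⟩ | ⟨h, _⟩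
      · exact ⟨k, ⟨⟨by omega, hk₂⟩, by omega⟩, abs_of_pos (by omega)⟩
      · refine ⟨-k, ⟨⟨by omega, by omega⟩, by rw [hf]; omega⟩, ?_⟩
        rw [abs_neg]
        exact abs_of_pos (by omega)
  rw [← himage, oddHalf_image_iff hinj fun i _ => by
    rcases abs_cases i with ⟨h, _⟩ | ⟨h, _⟩ <;> omega]

lemma OddHalf.filter_neg_lt {e : ℕ} (he : 2 ∣ e) {f : ℤ → ℤ} (hf : ∀ j, f (-j) = -f j)
    {q : ℤ} (hq : ∀ i ∈ Icc (-(e : ℤ)) e, f i ≠ q)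
    (h : OddHalf {i ∈ Icc (-(e : ℤ)) e | q < f i}) :
    OddHalf {i ∈ Icc (-(e : ℤ)) e | -q < f i} := by
  set I := Icc (-(e : ℤ)) e
  have hI (i : ℤ) : -i ∈ I ↔ i ∈ I := by simp only [I, mem_Icc]; omega
  -- `i ↦ -i` exchanges `{-q < f}` with the complement of `{q < f}`, as `q` is not a value
  have hrefl (r : ℤ) :
      #{i ∈ I | ¬(-q < f i) ∧ i % 2 = r} = #{i ∈ I | q < f i ∧ i % 2 = r} := by
    have hneg : Set.BijOn (fun i => -i) (I : Set ℤ) I :=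
      ⟨fun i hi => (hI i).2 hi, neg_injective.injOn,
        fun i hi => ⟨-i, (hI i).2 hi, neg_neg i⟩⟩
    refine Eq.trans ?_ (card_filter_comp_of_bijOn hneg fun i => q < f i ∧ i % 2 = r)
    refine congrArg card (filter_congr fun i hi => ?_)
    have := hq (-i) ((hI i).2 hi)
    rw [hf] at this ⊢
    omega
  have hsplit (r : ℤ) :
      #{i ∈ I | -q < f i ∧ i % 2 = r} + #{i ∈ I | ¬(-q < f i) ∧ i % 2 = r} =
      #{i ∈ I | i % 2 = r} := by
    rw [← card_filter_add_card_filter_not (s := {i ∈ I | i % 2 = r}) fun i => -q < f i,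
      filter_filter, filter_filter]
    simp only [and_comm]
  have hodd := card_filter_odd_Ioc (show -(e : ℤ) - 1 ≤ e by omega)
  have hIoc : Ioc (-(e : ℤ) - 1) e = I := by ext; simp [I]
  have htot := card_filter_even_add_card_filter_odd I
  have hcard : (#I : ℤ) = 2 * e + 1 := by simp only [I, Int.card_Icc]; omega
  have h1 := hsplit 1
  have h0 := hsplit 0
  have hp := card_filter_even_add_card_filter_odd {i ∈ I | q < f i}
  have hm := card_filter_even_add_card_filter_odd {i ∈ I | -q < f i}
  rw [hrefl] at h0 h1
  rw [OddHalf, filter_filter] at h ⊢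
  rw [filter_filter, filter_filter] at hp hm
  rw [hIoc] at hodd
  omega

lemma oddHalf_filter_lt_of_strictMonoOn {e : ℕ} (he : 2 ∣ e) {f : ℤ → ℤ}
    (hf : StrictMonoOn f (Set.Icc (-(e : ℤ)) e)) (c : ℤ) :
    OddHalf {i ∈ Icc (-(e : ℤ)) e | c < f i} := by
  set S := {i ∈ Icc (-(e : ℤ)) e | c < f i}
  have hsub : S ⊆ Ioc ((e : ℤ) - #S) e := by
    intro i hi
    have hi' := mem_filter.1 hi
    have hup : Icc i e ⊆ S := fun k hk => by
      simp only [mem_Icc] at hk hi'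
      refine mem_filter.2 ⟨mem_Icc.2 ⟨by omega, hk.2⟩, hi'.2.trans_le ?_⟩
      exact hf.monotoneOn ⟨by omega, by omega⟩ ⟨by omega, hk.2⟩ hk.1
    have := card_le_card hup
    rw [Int.card_Icc] at this
    simp only [mem_Icc, mem_Ioc] at hi' ⊢
    omega
  have hS : S = Ioc ((e : ℤ) - #S) e := eq_of_subset_of_card_le hsub (by simp)
  rw [hS]
  exact oddHalf_Ioc (by omega) (by omega)

lemma card_filter_even_le_card_filter_odd_add {n e : ℕ} (hn : 2 ∣ n) (hen : e ≤ n)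
    {v : ℤ → ℤ} (hv : Set.BijOn v (Set.Icc 1 n) (Set.Icc 1 n))
    (hvpar : ∀ j ∈ Set.Icc (1 : ℤ) n, v j % 2 = j % 2)
    (hstep : ∀ j : ℤ, 1 ≤ j → j < n → j % 2 = 1 → v j < v (j + 1)) {t : ℤ}
    (ht : 0 ≤ t) (htn : t ≤ n) :
    (#{j ∈ Icc (1 : ℤ) e | t < v j ∧ j % 2 = 0} : ℤ) ≤
      #{j ∈ Icc (1 : ℤ) e | t < v j ∧ j % 2 = 1} + t % 2 := by
  have htotal (r : ℤ) :
      #{j ∈ Icc (1 : ℤ) n | t < v j ∧ j % 2 = r} = #{m ∈ Ioc t n | m % 2 = r} := by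
    refine card_nbij v (fun j hj => ?_) (hv.injOn.mono fun j hj => ?_) fun m hm => ?_
    · simp only [coe_filter, mem_Icc, Set.mem_ofPred_eq, mem_Ioc] at hj ⊢
      have := (hv.mapsTo (show j ∈ Set.Icc (1 : ℤ) n from hj.1)).2
      have := hvpar j hj.1
      exact ⟨⟨hj.2.1, by assumption⟩, by omega⟩
    · simp only [coe_filter, mem_Icc, Set.mem_ofPred_eq] at hj
      exact hj.1
    · simp only [coe_filter, mem_Ioc, Set.mem_ofPred_eq] at hm
      obtain ⟨j, hj, rfl⟩ :=
        hv.surjOn (show m ∈ Set.Icc (1 : ℤ) n from ⟨by omega, hm.1.2⟩)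
      refine ⟨j, ?_, rfl⟩
      simp only [coe_filter, mem_Icc, Set.mem_ofPred_eq]
      exact ⟨hj, hm.1.1, by rw [← hvpar j hj]; exact hm.2⟩
  have hsplit (r : ℤ) : #{j ∈ Icc (1 : ℤ) n | t < v j ∧ j % 2 = r} =
      #{j ∈ Icc (1 : ℤ) e | t < v j ∧ j % 2 = r} +
        #{j ∈ Ioc (e : ℤ) n | t < v j ∧ j % 2 = r} := by
    rw [← card_union_of_disjoint (disjoint_filter_filter (disjoint_left.2 fun j hj hj' => by
      simp only [mem_Icc, mem_Ioc] at hj hj'; omega)), ← filter_union]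
    congr 2
    ext j
    simp only [mem_union, mem_Icc, mem_Ioc]
    omega
  have hcompl := card_filter_odd_le_card_filter_even (P := Ioc (e : ℤ) n) (g := v)
    (fun j hj hjo => by
      simp only [mem_Ioc] at hj ⊢
      exact ⟨⟨by omega, by omega⟩, hstep j (by omega) (by omega) hjo⟩) t
  have hodd := card_filter_odd_Ioc htn
  have hall := card_filter_even_add_card_filter_odd (Ioc t n)
  rw [Int.card_Ioc] at hall
  have := htotal 0
  have := htotal 1
  have := hsplit 0
  have := hsplit 1
  omega

lemma lt_add_one_of_even_descents {n : ℕ} {w u v : ℤ → ℤ} (hw : IsSigned n w)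
    (humono : StrictMonoOn u (Set.Icc 1 n)) (hv : Set.BijOn v (Set.Icc 1 n) (Set.Icc 1 n))
    (hfact : ∀ j, w j = u (v j)) (hdesc : ∀ i ∈ Dset n w, i % 2 = 0) (j : ℤ) (hj : 1 ≤ j)
    (hjn : j < n) (hjodd : j % 2 = 1) : v j < v (j + 1) := by
  have hnd : ¬w (j + 1) < w j := fun hd => by
    have := hdesc j (mem_filter.2 ⟨mem_Ico.2 ⟨by omega, hjn⟩, hd⟩)
    omega
  have hne : w j ≠ w (j + 1) := fun h => by
    have := hw.2.injOn (show j ∈ Set.Icc (-(n : ℤ)) n from ⟨by omega, by omega⟩)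
      (show j + 1 ∈ Set.Icc (-(n : ℤ)) n from ⟨by omega, by omega⟩) h
    omega
  have hlt : w j < w (j + 1) := lt_of_le_of_ne (not_lt.1 hnd) hne
  rwa [hfact, hfact, humono.lt_iff_lt (hv.mapsTo ⟨hj, hjn.le⟩)
    (hv.mapsTo ⟨by omega, by omega⟩)] at hlt

lemma oddHalf_filter_lt_of_factorization {n e : ℕ} (hn : 2 ∣ n) (he : 2 ∣ e) (hen : e ≤ n)
    {w u v : ℤ → ℤ} (hw : IsSigned n w) (hu : IsSigned n u)
    (humono : StrictMonoOn u (Set.Icc 1 n)) (hue : ∀ j ∈ Icc (1 : ℤ) n, |u j| % 2 = j % 2)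
    (hv : Set.BijOn v (Set.Icc 1 n) (Set.Icc 1 n))
    (hvpar : ∀ j ∈ Set.Icc (1 : ℤ) n, v j % 2 = j % 2)
    (hstep : ∀ j : ℤ, 1 ≤ j → j < n → j % 2 = 1 → v j < v (j + 1))
    (hfact : ∀ j, w j = u (v j)) {j₀ : ℤ} (hj₀ : j₀ ∈ Ioc (e : ℤ) n) :
    OddHalf {i ∈ Icc (-(e : ℤ)) e | w j₀ < w i} := by
  rw [mem_Ioc] at hj₀
  have hm₀ : v j₀ ∈ Set.Icc (1 : ℤ) n := hv.mapsTo ⟨by omega, hj₀.2⟩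
  obtain ⟨α, hα, hαq, hend, hwindow⟩ := exists_window hu humono hm₀
  set q := |u (v j₀)| with hq_def
  have hq : 1 ≤ q := (hu.bijOn_abs_Icc_one.mapsTo hm₀).1
  have hIcc {j : ℤ} (hj : j ∈ Icc (1 : ℤ) e) : j ∈ Set.Icc (1 : ℤ) n := by
    simp only [mem_Icc] at hj
    exact ⟨hj.1, by omega⟩
  have houter : OddHalf {k ∈ Icc (1 : ℤ) e | v k ≤ α ∨ α + q < v k} := by
    refine oddHalf_filter_outside_window (n := n) (P := Icc (1 : ℤ) e) (g := v)
      (fun j hj => (hv.mapsTo (hIcc hj)).1)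
      (card_filter_odd_le_card_filter_even fun j hj hjo => ?_)
      (fun t ht htn => card_filter_even_le_card_filter_odd_add hn hen hv hvpar hstep ht htn)
      hα hq hαq (fun j hj hvj => ?_) hend ?_
    · simp only [mem_Icc] at hj ⊢
      exact ⟨⟨by omega, by omega⟩, hstep j hj.1 (by omega) hjo⟩
    · have := hv.injOn (hIcc hj) ⟨by omega, hj₀.2⟩ hvj
      simp only [mem_Icc] at hj
      omega
    · have := hue (v j₀) (by simpa using hm₀)
      omega
  have hupper : OddHalf {i ∈ Icc (-(e : ℤ)) e | q < w i} := by
    have hwin : {k ∈ Icc (1 : ℤ) e | q < |w k|} =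
        {k ∈ Icc (1 : ℤ) e | v k ≤ α ∨ α + q < v k} :=
      filter_congr fun k hk => by rw [hfact]; exact hwindow (v k) (hv.mapsTo (hIcc hk))
    rw [oddHalf_filter_lt_iff_abs hw.1 (by omega), hwin]
    exact houter
  rcases abs_cases (u (v j₀)) with ⟨h, _⟩ | ⟨h, _⟩
  · rwa [hfact, ← h]
  · rw [hfact, show u (v j₀) = -q by omega]
    refine hupper.filter_neg_lt he hw.1 fun i hi hiq => ?_
    simp only [mem_Icc] at hi
    have := hw.2.injOn (show i ∈ Set.Icc (-(n : ℤ)) n from ⟨by omega, by omega⟩)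
      (show -j₀ ∈ Set.Icc (-(n : ℤ)) n from ⟨by omega, by omega⟩)
      (by rw [hw.1 j₀, hfact j₀]; omega)
    omega

section Lset

variable {n : ℕ} {f : ℤ → ℤ}

lemma neg_swap_mem_Lset (hf : ∀ j, f (-j) = -f j) {p : ℤ × ℤ} (hp : p ∈ Lset n f) :
    (-p.2, -p.1) ∈ Lset n f := by
  simp only [Lset, mem_filter, mem_product, mem_Icc] at hp ⊢
  rw [hf, hf]
  omega

lemma card_filter_Lset_neg_swap (hf : ∀ j, f (-j) = -f j) (P Q : ℤ × ℤ → Prop)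
    [DecidablePred P] [DecidablePred Q] (hPQ : ∀ p ∈ Lset n f, P p ↔ Q (-p.2, -p.1)) :
    #{p ∈ Lset n f | P p} = #{p ∈ Lset n f | Q p} := by
  refine card_nbij' (fun p => (-p.2, -p.1)) (fun p => (-p.2, -p.1)) (fun p hp => ?_)
    (fun p hp => ?_) (fun p _ => by simp) fun p _ => by simp
  · simp only [coe_filter, Set.mem_ofPred_eq] at hp ⊢
    exact ⟨neg_swap_mem_Lset hf hp.1, (hPQ p hp.1).1 hp.2⟩
  · simp only [coe_filter, Set.mem_ofPred_eq] at hp ⊢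
    have hp' := neg_swap_mem_Lset hf hp.1
    exact ⟨hp', (hPQ _ hp').2 (by simpa using hp.2)⟩

lemma even_card_Lset (hf : ∀ j, f (-j) = -f j) : Even #(Lset n f) := by
  have hpos := card_filter_Lset_neg_swap (n := n) hf (fun p => 0 < p.1 + p.2)
    (fun p => ¬0 < p.1 + p.2) fun p hp => by
      simp only [Lset, mem_filter] at hp
      omega
  rw [← card_filter_add_card_filter_not (s := Lset n f) fun p => 0 < p.1 + p.2, ← hpos]
  exact ⟨_, rfl⟩

lemma card_Lset_eq (hf : ∀ j, f (-j) = -f j) (A : Finset ℤ) (hA : ∀ i, -i ∈ A ↔ i ∈ A) :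
    #(Lset n f) = #{p ∈ Lset n f | p.1 ∈ A ∧ p.2 ∈ A} +
      2 * #{p ∈ Lset n f | p.1 ∈ A ∧ p.2 ∉ A} +
      #{p ∈ Lset n f | p.1 ∉ A ∧ p.2 ∉ A} := by
  have hsym := card_filter_Lset_neg_swap (n := n) hf (fun p => p.1 ∉ A ∧ p.2 ∈ A)
    (fun p => p.1 ∈ A ∧ p.2 ∉ A) fun p _ => by simp [hA, and_comm]
  have hfour : #(Lset n f) = #{p ∈ Lset n f | p.1 ∈ A ∧ p.2 ∈ A} +
      #{p ∈ Lset n f | p.1 ∈ A ∧ p.2 ∉ A} + #{p ∈ Lset n f | p.1 ∉ A ∧ p.2 ∈ A} +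
      #{p ∈ Lset n f | p.1 ∉ A ∧ p.2 ∉ A} := by
    rw [card_eq_sum_ones]
    simp only [card_filter, ← sum_add_distrib]
    refine sum_congr rfl fun p _ => ?_
    by_cases h₁ : p.1 ∈ A <;> by_cases h₂ : p.2 ∈ A <;> simp [h₁, h₂]
  omega

lemma card_filter_Lset_cross {e : ℕ} (hen : e ≤ n) :
    #{p ∈ Lset n f | p.1 ∈ Icc (-(e : ℤ)) e ∧ p.2 ∉ Icc (-(e : ℤ)) e} =
      ∑ j ∈ Ioc (e : ℤ) n, #{i ∈ Icc (-(e : ℤ)) e | f j < f i ∧ i % 2 ≠ j % 2} := by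
  have hcross : {p ∈ Lset n f | p.1 ∈ Icc (-(e : ℤ)) e ∧ p.2 ∉ Icc (-(e : ℤ)) e} =
      {p ∈ Icc (-(e : ℤ)) e ×ˢ Ioc (e : ℤ) n | f p.2 < f p.1 ∧ p.1 % 2 ≠ p.2 % 2} := by
    ext ⟨i, j⟩
    simp only [Lset, mem_filter, mem_product, mem_Icc, mem_Ioc]
    omega
  rw [hcross, card_filter, sum_product_right]
  simp only [card_filter]

end Lset

lemma Lset_eq_filter_of_comp {n e : ℕ} (hen : e ≤ n) {w x y : ℤ → ℤ} (hy : IsSigned n y)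
    (hyfix : ∀ j : ℤ, (e : ℤ) < |j| → |j| ≤ n → y j = j)
    (hxmono : StrictMonoOn x (Set.Icc (-(e : ℤ)) e)) (hfact : ∀ j, w j = x (y j)) :
    Lset n y = {p ∈ Lset n w | p.1 ∈ Icc (-(e : ℤ)) e ∧ p.2 ∈ Icc (-(e : ℤ)) e} := by
  have hybij := hy.bijOn_Icc_of_fixes hen hyfix
  have hout (i : ℤ) (hi : -(n : ℤ) ≤ i ∧ i ≤ n) (hie : ¬(-(e : ℤ) ≤ i ∧ i ≤ e)) :
      y i = i := by
    apply hyfix <;> rcases abs_cases i with ⟨h, _⟩ | ⟨h, _⟩ <;> omega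
  have hin (i : ℤ) (hi : -(e : ℤ) ≤ i ∧ i ≤ e) : -(e : ℤ) ≤ y i ∧ y i ≤ e :=
    hybij.mapsTo hi
  have hlt {i j : ℤ} (hi : -(e : ℤ) ≤ i ∧ i ≤ e) (hj : -(e : ℤ) ≤ j ∧ j ≤ e) :
      w j < w i ↔ y j < y i := by
    rw [hfact, hfact]
    exact hxmono.lt_iff_lt (hin j hj) (hin i hi)
  ext ⟨i, j⟩
  simp only [Lset, mem_filter, mem_product, mem_Icc]
  constructor
  · rintro ⟨⟨hi, hj⟩, hij, hinv, hpar⟩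
    -- an inversion of `y` cannot involve a point that `y` fixes
    have hie : -(e : ℤ) ≤ i ∧ i ≤ e := by
      by_contra hie
      by_cases hje : -(e : ℤ) ≤ j ∧ j ≤ e
      · have := hin j hje
        have := hout i hi hie
        omega
      · have := hout i hi hie
        have := hout j hj hje
        omega
    have hje : -(e : ℤ) ≤ j ∧ j ≤ e := by
      by_contra hje
      have := hin i hie
      have := hout j hj hje
      omega
    exact ⟨⟨⟨hi, hj⟩, hij, (hlt hie hje).2 hinv, hpar⟩, hie, hje⟩
  · rintro ⟨⟨⟨hi, hj⟩, hij, hinv, hpar⟩, hie, hje⟩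
    exact ⟨⟨hi, hj⟩, hij, (hlt hie hje).1 hinv, hpar⟩

lemma card_Lset_of_comp {n e : ℕ} (hen : e ≤ n) {w x y : ℤ → ℤ}
    (hw : ∀ j, w (-j) = -w j) (hx : ∀ j, x (-j) = -x j) (hy : IsSigned n y)
    (hyfix : ∀ j : ℤ, (e : ℤ) < |j| → |j| ≤ n → y j = j)
    (hxmono : StrictMonoOn x (Set.Icc (-(e : ℤ)) e)) (hfact : ∀ j, w j = x (y j))
    (hcol : ∀ j ∈ Ioc (e : ℤ) n, #{i ∈ Icc (-(e : ℤ)) e | w j < w i ∧ i % 2 ≠ j % 2} =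
      #{i ∈ Icc (-(e : ℤ)) e | x j < x i ∧ i % 2 ≠ j % 2}) :
    #(Lset n w) = #(Lset n x) + #(Lset n y) := by
  have hI (i : ℤ) : -i ∈ Icc (-(e : ℤ)) e ↔ i ∈ Icc (-(e : ℤ)) e := by
    simp only [mem_Icc]; omega
  have hxinner :
      #{p ∈ Lset n x | p.1 ∈ Icc (-(e : ℤ)) e ∧ p.2 ∈ Icc (-(e : ℤ)) e} = 0 := by
    refine card_eq_zero.2 (filter_eq_empty_iff.2 fun p hp hpI => ?_)
    simp only [Lset, mem_filter, mem_Icc] at hp hpI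
    exact absurd hp.2.2.1 (not_lt.2 (hxmono.monotoneOn hpI.1 hpI.2 hp.2.1.le))
  have houter : {p ∈ Lset n w | p.1 ∉ Icc (-(e : ℤ)) e ∧ p.2 ∉ Icc (-(e : ℤ)) e} =
      {p ∈ Lset n x | p.1 ∉ Icc (-(e : ℤ)) e ∧ p.2 ∉ Icc (-(e : ℤ)) e} := by
    have hwx (i : ℤ) (hi : -(n : ℤ) ≤ i ∧ i ≤ n)
        (hie : ¬(-(e : ℤ) ≤ i ∧ i ≤ e)) : w i = x i := by
      rw [hfact, hyfix] <;> rcases abs_cases i with ⟨h, _⟩ | ⟨h, _⟩ <;> omega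
    ext ⟨i, j⟩
    simp only [Lset, mem_filter, mem_product, mem_Icc]
    constructor <;> rintro ⟨⟨⟨hi, hj⟩, hij, hinv, hpar⟩, hie, hje⟩ <;>
      refine ⟨⟨⟨hi, hj⟩, hij, ?_, hpar⟩, hie, hje⟩
    · rwa [← hwx i hi hie, ← hwx j hj hje]
    · rwa [hwx i hi hie, hwx j hj hje]
  have hw' := card_Lset_eq (n := n) hw _ hI
  have hx' := card_Lset_eq (n := n) hx _ hI
  rw [← Lset_eq_filter_of_comp hen hy hyfix hxmono hfact, card_filter_Lset_cross hen,
    sum_congr rfl hcol, houter] at hw'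
  rw [hxinner, card_filter_Lset_cross hen] at hx'
  omega

theorem L_additive_second_general (n : ℕ) (hn : 2 ∣ n) (w u v : ℤ → ℤ)
    (hw : IsSigned n w) (hu : IsSigned n u) (hv : IsSigned n v)
    (hasc : ∀ i j : ℤ, 1 ≤ i → i < j → j ≤ (n : ℤ) → u i < u j)
    (hpos : ∀ j ∈ Finset.Icc (1 : ℤ) n, 0 < v j)
    (hfact : ∀ j : ℤ, w j = u (v j))
    (hue : ∀ j ∈ Finset.Icc (1 : ℤ) n, |u j| % 2 = j % 2)
    (hve : ∀ j ∈ Finset.Icc (1 : ℤ) n, |v j| % 2 = j % 2)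
    (hdesc : ∀ i ∈ Dset n w, i % 2 = 0)
    (e : ℕ) (he2 : 2 ∣ e) (hen : e ≤ n - 1)
    (x y : ℤ → ℤ) (hx : IsSigned n x) (hy : IsSigned n y)
    (hyfix : ∀ j : ℤ, (e : ℤ) < |j| → |j| ≤ (n : ℤ) → y j = j)
    (hxpos : 0 < x 1)
    (hxasc : ∀ i : ℤ, 1 ≤ i → i < (e : ℤ) → x i < x (i + 1))
    (hfact2 : ∀ j : ℤ, w j = x (y j)) :
    Lstat n w = Lstat n x + Lstat n y := by
  have hen' : e ≤ n := by omega
  have humono : StrictMonoOn u (Set.Icc 1 n) := fun i hi j hj hij => hasc i j hi.1 hij hj.2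
  have hvbij := hv.bijOn_Icc_one hpos
  have hvpar (j : ℤ) (hj : j ∈ Set.Icc (1 : ℤ) n) : v j % 2 = j % 2 := by
    have hj' : j ∈ Icc (1 : ℤ) n := by simpa using hj
    rw [← hve j hj', abs_of_pos (hpos j hj')]
  have hstep := lt_add_one_of_even_descents hw humono hvbij hfact hdesc
  have hxmono := strictMonoOn_Icc_of_odd hx.1 hxpos hxasc
  have hybij := hy.bijOn_Icc_of_fixes hen' hyfix
  have hcard := card_Lset_of_comp hen' hw.1 hx.1 hy hyfix hxmono hfact2 fun j hj => by
    have hxj : x j = w j := by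
      simp only [mem_Ioc] at hj
      rw [hfact2, hyfix j (by rw [abs_of_pos (by omega)]; omega)
        (by rw [abs_of_pos (by omega)]; omega)]
    rw [← filter_filter, ← filter_filter, hxj]
    refine (oddHalf_filter_lt_of_factorization hn he2 hen' hw hu humono hue hvbij hvpar hstep
      hfact hj).card_filter_mod_two_ne_eq (oddHalf_filter_lt_of_strictMonoOn he2 hxmono _) ?_ j
    rw [← card_filter_comp_of_bijOn (s := Icc (-(e : ℤ)) e) (by rwa [coe_Icc])
      fun i => w j < x i]
    simp only [← hfact2]
  obtain ⟨a, ha⟩ := even_card_Lset (n := n) hx.1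
  obtain ⟨b, hb⟩ := even_card_Lset (n := n) hy.1
  simp only [Lstat]
  omega

/-- Second additivity result: let `n` be even and `w ∈ Eₙ` (both factors of
`w = u·v`, `u` ascending and `v ∈ Sₙ`, are even chessboard elements) with even
descent set. Let `e ∈ [n−1]` be even with `w(1) < ⋯ < w(e)`, and let
`w = x·y` be the parabolic factorisation with respect to `J = {s₀, …, s_{e−1}}`
(`y ∈ B_e ⊆ Bₙ`, `x` the minimal coset representative). Then
`L(w) = L(x) + L(y)`. -/
theorem L_additive_second (n : ℕ) (hn : 2 ∣ n) (w u v : ℤ → ℤ)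
    (hw : IsSigned n w) (hu : IsSigned n u) (hv : IsSigned n v)
    (hasc : ∀ i j : ℤ, 1 ≤ i → i < j → j ≤ (n : ℤ) → u i < u j)
    (hpos : ∀ j ∈ Finset.Icc (1 : ℤ) n, 0 < v j)
    (hfact : ∀ j : ℤ, w j = u (v j))
    (hue : ∀ j ∈ Finset.Icc (1 : ℤ) n, |u j| % 2 = j % 2)
    (hve : ∀ j ∈ Finset.Icc (1 : ℤ) n, |v j| % 2 = j % 2)
    (hdesc : ∀ i ∈ Dset n w, i % 2 = 0)
    (e : ℕ) (he2 : 2 ∣ e) (he1 : 1 ≤ e) (hen : e ≤ n - 1)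
    (hasce : ∀ i : ℤ, 1 ≤ i → i < (e : ℤ) → w i < w (i + 1))
    (x y : ℤ → ℤ) (hx : IsSigned n x) (hy : IsSigned n y)
    (hyfix : ∀ j : ℤ, (e : ℤ) < |j| → |j| ≤ (n : ℤ) → y j = j)
    (hxpos : 0 < x 1)
    (hxasc : ∀ i : ℤ, 1 ≤ i → i < (e : ℤ) → x i < x (i + 1))
    (hfact2 : ∀ j : ℤ, w j = x (y j)) :
    Lstat n w = Lstat n x + Lstat n y :=
  L_additive_second_general n hn w u v hw hu hv hasc hpos hfact hue hve hdesc e he2 hen x y hx hy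
    hyfix hxpos hxasc hfact2
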